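/- Let κ > 0, let {q_i}_{i≥1} be an enumeration of the rational numbers, let V = ⋃_{i≥1} (q_i − κ·2^{−(i+1)}, q_i + κ·2^{−(i+1)}), K = ℝ\V, and α = χ_K the characteristic function of K. Let T > 0 and let u ∈ L^∞([0,T]×ℝ) be a weak solution of u_t + (α(x)·u(1−u))_x = 0, i.e. ∫₀^T∫_ℝ [u φ_t + α(x)u(1−u) φ_x] dx dt = 0 for every φ ∈ C^∞_c((0,T)×ℝ), and assume the map t ↦ u(t,·) is continuous from [0,T] into L^∞(ℝ) endowed with the weak* topology. Then u is constant in time, u(t,x) = u(0,x) =: ū(x) for all t ∈ [0,T], and ū(x) ∈ {0,1} for almost every x ∈ K. -/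

import Mathlib

/-!
Testing the equation against `φ(t, x) = ψ(t) χ(x)` with `χ' = 0` on `K` kills the flux term, so
`t ↦ ∫ u(t) χ` has zero weak derivative on `(0, T)` and, being continuous, is constant on `[0, T]`.
Because `V` is open and dense, such `χ` approximate the indicator of any interval with endpoints
in `V`; hence the primitive of `u(t) - u(0)` vanishes on `V`, so everywhere, and `u(t) = u(0)`
a.e. by Lebesgue differentiation. Once `u` is stationary, the flux `α ū (1 - ū)` has zero weak
derivative, so it is a.e. constant; it vanishes on `V`, a set of positive measure, so the constant
is `0`, and `ū (1 - ū) = 0` a.e. on `K`, where `α = 1`.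
-/

open MeasureTheory Set Filter Topology

/-- The open set `V = ⋃ᵢ (qᵢ − κ 2^{−(i+1)}, qᵢ + κ 2^{−(i+1)})` covering the
rationals (with the enumeration indexed by `ℕ` starting at `0`). -/
def Vset (κ : ℝ) (q : ℕ → ℝ) : Set ℝ :=
  ⋃ i : ℕ, Ioo (q i - κ * (2:ℝ)^(-(i:ℤ) - 2)) (q i + κ * (2:ℝ)^(-(i:ℤ) - 2))

/-- The closed, totally disconnected set `K = ℝ \ V`. -/
def Kset (κ : ℝ) (q : ℕ → ℝ) : Set ℝ := (Vset κ q)ᶜ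

open Classical in
/-- `α = χ_K`, the characteristic function of `K`. -/
noncomputable def alphaFun (κ : ℝ) (q : ℕ → ℝ) (x : ℝ) : ℝ :=
  if x ∈ Kset κ q then 1 else 0

open scoped ContDiff

theorem setIntegral_eq_integral_of_tsupport_subset {X E : Type*} [MeasurableSpace X]
    [TopologicalSpace X] [NormedAddCommGroup E] [NormedSpace ℝ E] {μ : Measure X}
    {f : X → E} {s : Set X} (hs : tsupport f ⊆ s) : ∫ x in s, f x ∂μ = ∫ x, f x ∂μ :=
  setIntegral_eq_integral_of_forall_compl_eq_zero fun _ hx =>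
    image_eq_zero_of_notMem_tsupport fun h => hx (hs h)

theorem MeasureTheory.IntegrableOn.integrable_mul_of_tsupport_subset {X : Type*} [MeasurableSpace X]
    [TopologicalSpace X] [OpensMeasurableSpace X] [T2Space X] [SecondCountableTopology X]
    {μ : Measure X} {h g : X → ℝ} {K : Set X} (hh : IntegrableOn h K μ) (hK : IsCompact K)
    (hg : Continuous g) (hgK : tsupport g ⊆ K) : Integrable (fun x => h x * g x) μ :=
  (hh.mul_continuousOn hg.continuousOn hK).integrable_of_forall_notMem_eq_zero fun _ hx => by
    rw [image_eq_zero_of_notMem_tsupport fun h => hx (hgK h), mul_zero]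

theorem hasCompactSupport_of_tsupport_subset_Ioo {f : ℝ → ℝ} {a b : ℝ}
    (hf : tsupport f ⊆ Ioo a b) : HasCompactSupport f :=
  isCompact_Icc.of_isClosed_subset (isClosed_tsupport f) (hf.trans Ioo_subset_Icc_self)

theorem tsupport_mul_prod_subset {X Y R : Type*} [TopologicalSpace X] [TopologicalSpace Y]
    [MulZeroClass R] (ψ : X → R) (χ : Y → R) :
    tsupport (fun p : X × Y => ψ p.1 * χ p.2) ⊆ tsupport ψ ×ˢ tsupport χ := by
  rw [Set.prod_eq]
  exact subset_inter
    (tsupport_mul_subset_left.trans (tsupport_comp_subset_preimage ψ continuous_fst))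
    (tsupport_mul_subset_right.trans (tsupport_comp_subset_preimage χ continuous_snd))

theorem IsCompact.exists_Icc_subset_and_subset {S U : Set ℝ} (hS : IsCompact S)
    (hU : U.OrdConnected) (hSU : S ⊆ U) : ∃ a b, S ⊆ Icc a b ∧ Icc a b ⊆ U := by
  rcases S.eq_empty_or_nonempty with rfl | hne
  · exact ⟨1, 0, empty_subset _, by simp⟩
  exact ⟨sInf S, sSup S, hS.isBounded.subset_Icc_sInf_sSup,
    hU.out (hSU (hS.sInf_mem hne)) (hSU (hS.sSup_mem hne))⟩

theorem IsOpen.exists_contDiff_tsupport_subset_integral_eq_one {E : Type*} [NormedAddCommGroup E]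
    [NormedSpace ℝ E] [FiniteDimensional ℝ E] [MeasurableSpace E] [BorelSpace E]
    {μ : Measure E} [IsLocallyFiniteMeasure μ] [μ.IsOpenPosMeasure] {U : Set E} (hU : IsOpen U)
    (hne : U.Nonempty) :
    ∃ ρ : E → ℝ, ContDiff ℝ ∞ ρ ∧ HasCompactSupport ρ ∧ tsupport ρ ⊆ U ∧ ∫ x, ρ x ∂μ = 1 := by
  obtain ⟨x₀, hx₀⟩ := hne
  obtain ⟨r, hr, hball⟩ := Metric.isOpen_iff.1 hU x₀ hx₀
  let f : ContDiffBump x₀ := ⟨r / 4, r / 2, by positivity, by linarith⟩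
  refine ⟨f.normed μ, f.contDiff_normed, f.hasCompactSupport_normed, ?_, f.integral_normed⟩
  rw [f.tsupport_normed_eq]
  exact (Metric.closedBall_subset_ball (by show r / 2 < r; linarith)).trans hball

theorem exists_contDiff_tsupport_subset_deriv_eq {φ : ℝ → ℝ} (hφ : ContDiff ℝ ∞ φ) {a b : ℝ}
    (hφs : tsupport φ ⊆ Icc a b) (hφ0 : ∫ x, φ x = 0) :
    ∃ ψ : ℝ → ℝ, ContDiff ℝ ∞ ψ ∧ tsupport ψ ⊆ Icc a b ∧ deriv ψ = φ := by
  have hφc := hφ.continuous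
  have hvanish : ∀ x ∉ Icc a b, φ x = 0 := fun x hx =>
    image_eq_zero_of_notMem_tsupport fun h => hx (hφs h)
  set ψ : ℝ → ℝ := fun x => ∫ t in (a - 1)..x, φ t
  have hderiv : deriv ψ = φ := funext (hφc.deriv_integral _ _)
  refine ⟨ψ, contDiff_infty_iff_deriv.2 ⟨?_, hderiv ▸ hφ⟩, ?_, hderiv⟩
  · exact fun x => (hφc.integral_hasStrictDerivAt _ x).hasDerivAt.differentiableAt
  refine closure_minimal (fun x hx => ?_) isClosed_Icc
  by_contra hxab
  refine hx ?_
  show ∫ t in (a - 1)..x, φ t = 0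
  rcases not_and_or.1 hxab with hxa | hxb
  · have hlt : max (a - 1) x < a := max_lt (by linarith) (not_le.1 hxa)
    refine (intervalIntegral.integral_congr fun t ht => hvanish t fun h => ?_).trans
      intervalIntegral.integral_zero
    linarith [ht.2, h.1]
  · rw [intervalIntegral.integral_eq_integral_of_support_subset, hφ0]
    intro t ht
    by_contra hmem
    exact ht (hvanish t fun h => hmem ⟨by linarith [h.1], by linarith [h.2, not_le.1 hxb]⟩)

/-- The zero-mean combination `(∫ ρ) g - (∫ g) ρ` is the derivative of a test function
supported in `[a, b]`. -/
theorem integral_mul_mul_integral_eq_of_integral_mul_deriv_eq_zero {h : ℝ → ℝ}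
    {a b : ℝ} (hh : IntegrableOn h (Icc a b))
    (hz : ∀ ψ : ℝ → ℝ, ContDiff ℝ ∞ ψ → tsupport ψ ⊆ Icc a b → ∫ x, h x * deriv ψ x = 0)
    {g ρ : ℝ → ℝ} (hg : ContDiff ℝ ∞ g) (hgs : tsupport g ⊆ Icc a b)
    (hρ : ContDiff ℝ ∞ ρ) (hρs : tsupport ρ ⊆ Icc a b) :
    (∫ x, h x * g x) * ∫ x, ρ x = (∫ x, g x) * ∫ x, h x * ρ x := by
  have hint : ∀ {f : ℝ → ℝ}, Continuous f → tsupport f ⊆ Icc a b → Integrable f :=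
    fun hf hfs => hf.integrable_of_hasCompactSupport (isCompact_Icc.of_isClosed_subset
      (isClosed_tsupport _) hfs)
  set φ : ℝ → ℝ := fun x => (∫ y, ρ y) * g x - (∫ y, g y) * ρ x
  have hφ0 : ∫ x, φ x = 0 := by
    rw [integral_sub ((hint hg.continuous hgs).const_mul _) ((hint hρ.continuous hρs).const_mul _),
      integral_const_mul, integral_const_mul, mul_comm, sub_self]
  have hφs : tsupport φ ⊆ Icc a b := by
    refine closure_minimal (fun x hx => ?_) isClosed_Icc
    by_contra hxab
    refine hx ?_
    simp only [φ, image_eq_zero_of_notMem_tsupport fun h => hxab (hgs h),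
      image_eq_zero_of_notMem_tsupport fun h => hxab (hρs h), mul_zero, sub_zero]
  obtain ⟨ψ, hψ, hψs, hψφ⟩ :=
    exists_contDiff_tsupport_subset_deriv_eq ((contDiff_const.mul hg).sub (contDiff_const.mul hρ))
      hφs hφ0
  have h0 : ∫ x, ((∫ y, ρ y) * (h x * g x) - (∫ y, g y) * (h x * ρ x)) = 0 := by
    rw [← hz ψ hψ hψs, hψφ]
    congr 1 with x
    ring
  rw [integral_sub
    ((hh.integrable_mul_of_tsupport_subset isCompact_Icc hg.continuous hgs).const_mul _)
    ((hh.integrable_mul_of_tsupport_subset isCompact_Icc hρ.continuous hρs).const_mul _),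
    integral_const_mul, integral_const_mul] at h0
  linarith

/-- The du Bois-Reymond lemma. -/
theorem exists_ae_restrict_eq_const_of_integral_mul_deriv_eq_zero {U : Set ℝ} (hU : IsOpen U)
    (hUc : U.OrdConnected) {h : ℝ → ℝ} (hh : LocallyIntegrableOn h U)
    (hz : ∀ ψ : ℝ → ℝ, ContDiff ℝ ∞ ψ → HasCompactSupport ψ → tsupport ψ ⊆ U →
      ∫ x, h x * deriv ψ x = 0) :
    ∃ c, ∀ᵐ x ∂volume.restrict U, h x = c := by
  rcases U.eq_empty_or_nonempty with rfl | hne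
  · exact ⟨0, by simp⟩
  obtain ⟨ρ, hρ, hρc, hρU, hρ1⟩ :=
    hU.exists_contDiff_tsupport_subset_integral_eq_one (μ := volume) hne
  set c := ∫ x, h x * ρ x
  refine ⟨c, ?_⟩
  rw [ae_restrict_iff' hU.measurableSet]
  suffices hsmul : ∀ g : ℝ → ℝ, ContDiff ℝ ∞ g → HasCompactSupport g → tsupport g ⊆ U →
      ∫ x, g x • (h x - c) = 0 by
    filter_upwards [hU.ae_eq_zero_of_integral_contDiff_smul_eq_zero
      (hh.sub (locallyIntegrableOn_const c)) hsmul] with x hx hxU using sub_eq_zero.1 (hx hxU)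
  intro g hg hgc hgU
  obtain ⟨a, b, hsub, hIU⟩ := (hgc.union hρc).exists_Icc_subset_and_subset
    hUc (union_subset hgU hρU)
  have hhI : IntegrableOn h (Icc a b) := hh.integrableOn_compact_subset hIU isCompact_Icc
  have hgI : tsupport g ⊆ Icc a b := subset_union_left.trans hsub
  have hpair := integral_mul_mul_integral_eq_of_integral_mul_deriv_eq_zero hhI
    (fun ψ hψ hψI => hz ψ hψ (isCompact_Icc.of_isClosed_subset (isClosed_tsupport _) hψI)
      (hψI.trans hIU))
    hg hgI hρ (subset_union_right.trans hsub)
  rw [hρ1, mul_one] at hpair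
  calc ∫ x, g x • (h x - c) = ∫ x, (h x * g x - c * g x) := by
        congr 1 with x
        rw [smul_eq_mul]
        ring
    _ = 0 := by
        rw [integral_sub (hhI.integrable_mul_of_tsupport_subset isCompact_Icc hg.continuous hgI)
          ((hg.continuous.integrable_of_hasCompactSupport hgc).const_mul c), integral_const_mul,
          hpair]
        ring

theorem ContDiffBump.fderiv_eq_zero {E : Type*} [NormedAddCommGroup E] [NormedSpace ℝ E]
    [HasContDiffBump E] {c x : E} (f : ContDiffBump c)
    (hx : dist x c < f.rIn ∨ f.rOut < dist x c) : fderiv ℝ f x = 0 := by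
  rcases hx with hin | hout
  · rw [(f.eventuallyEq_one_of_mem_ball hin).fderiv_eq]
    exact fderiv_const_apply 1
  · have : (f : E → ℝ) =ᶠ[𝓝 x] fun _ => 0 := by
      filter_upwards [(isOpen_lt continuous_const (continuous_id.dist continuous_const)).mem_nhds
        hout] with y hy using f.zero_of_le_dist (le_of_lt hy)
    rw [this.fderiv_eq]
    exact fderiv_const_apply 0

theorem tendsto_integral_mul_contDiffBump {E : Type*} [NormedAddCommGroup E] [NormedSpace ℝ E]
    [FiniteDimensional ℝ E] [MeasurableSpace E] [BorelSpace E] {μ : Measure E}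
    [IsLocallyFiniteMeasure μ] {c : E} {r : ℝ} {h : E → ℝ} (hh : LocallyIntegrable h μ)
    (f : ℕ → ContDiffBump c) (hin : ∀ n, (f n).rIn = r)
    (hout : Tendsto (fun n => (f n).rOut) atTop (𝓝 r)) :
    Tendsto (fun n => ∫ x, h x * f n x ∂μ) atTop (𝓝 (∫ x in Metric.closedBall c r, h x ∂μ)) := by
  rw [← integral_indicator Metric.isClosed_closedBall.measurableSet]
  refine tendsto_integral_filter_of_dominated_convergence
    ((Metric.closedBall c (r + 1)).indicator fun x => ‖h x‖) ?_ ?_ ?_ ?_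
  · exact Eventually.of_forall fun n =>
      hh.aestronglyMeasurable.mul (f n).continuous.aestronglyMeasurable
  · filter_upwards [hout.eventually (gt_mem_nhds (lt_add_one r))] with n hn
    refine Eventually.of_forall fun x => ?_
    by_cases hx : x ∈ Metric.closedBall c (r + 1)
    · rw [indicator_of_mem hx, norm_mul]
      exact mul_le_of_le_one_right (norm_nonneg _)
        (by rw [Real.norm_of_nonneg (f n).nonneg]; exact (f n).le_one)
    · rw [indicator_of_notMem hx, (f n).zero_of_le_dist, mul_zero, norm_zero]
      exact hn.le.trans (not_le.1 hx).le
  · exact IntegrableOn.integrable_indicator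
      (hh.integrableOn_isCompact (isCompact_closedBall c (r + 1))).norm
      Metric.isClosed_closedBall.measurableSet
  · refine Eventually.of_forall fun x => ?_
    by_cases hx : x ∈ Metric.closedBall c r
    · rw [indicator_of_mem hx]
      refine tendsto_const_nhds.congr fun n => ?_
      rw [(f n).one_of_mem_closedBall (hin n ▸ hx), mul_one]
    · rw [indicator_of_notMem hx]
      refine tendsto_const_nhds.congr' ?_
      filter_upwards [hout.eventually (gt_mem_nhds (not_le.1 hx))] with n hn
      rw [(f n).zero_of_le_dist hn.le, mul_zero]

theorem intervalIntegral_eq_zero_of_integral_mul_eq_zero_of_deriv_eq_zero_off {V : Set ℝ}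
    (hV : IsOpen V) {h : ℝ → ℝ} (hh : LocallyIntegrable h)
    (hz : ∀ χ : ℝ → ℝ, ContDiff ℝ ∞ χ → HasCompactSupport χ → (∀ x ∉ V, deriv χ x = 0) →
      ∫ x, h x * χ x = 0)
    {a b : ℝ} (ha : a ∈ V) (hb : b ∈ V) (hab : a < b) : ∫ x in a..b, h x = 0 := by
  obtain ⟨δa, hδa, hballa⟩ := Metric.isOpen_iff.1 hV a ha
  obtain ⟨δb, hδb, hballb⟩ := Metric.isOpen_iff.1 hV b hb
  have hr : 0 < (b - a) / 2 := by linarith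
  have hε : ∀ n : ℕ, 0 < min δa δb / (n + 2) := fun n => by positivity
  let f : ℕ → ContDiffBump ((a + b) / 2) := fun n =>
    ⟨(b - a) / 2, (b - a) / 2 + min δa δb / (n + 2), hr, lt_add_of_pos_right _ (hε n)⟩
  -- `f n` is locally constant off the two layers of width `min δa δb / (n + 2)` outside `a`
  -- and `b`, which lie in `V`; as `n → ∞` it tends to the indicator of `[a, b]`.
  have hfV : ∀ n, ∀ x ∉ V, deriv (f n) x = 0 := by
    intro n x hx
    rw [deriv, (f n).fderiv_eq_zero, zero_apply]
    by_contra! hlayer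
    have hεδ : min δa δb / (n + 2) < min δa δb :=
      div_lt_self (lt_min hδa hδb) (by linarith [n.cast_nonneg (α := ℝ)])
    have := min_le_left δa δb
    have := min_le_right δa δb
    simp only [f, Real.dist_eq] at hlayer
    rcases le_abs'.1 hlayer.1 with hleft | hright
    · exact hx (hballa (by rw [Metric.mem_ball, Real.dist_eq, abs_lt]; constructor <;>
        linarith [neg_abs_le (x - (a + b) / 2), hlayer.2]))
    · exact hx (hballb (by rw [Metric.mem_ball, Real.dist_eq, abs_lt]; constructor <;>
        linarith [le_abs_self (x - (a + b) / 2), hlayer.2]))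
  have hout : Tendsto (fun n => (f n).rOut) atTop (𝓝 ((b - a) / 2)) := by
    have := (tendsto_const_nhds (x := (b - a) / 2)).add
      ((tendsto_const_nhds (x := min δa δb)).div_atTop
        (tendsto_natCast_atTop_atTop.atTop_add (tendsto_const_nhds (x := (2 : ℝ)))))
    rwa [add_zero] at this
  have hlim := tendsto_integral_mul_contDiffBump (r := (b - a) / 2) hh f (fun _ => rfl) hout
  rw [Real.closedBall_eq_Icc, show (a + b) / 2 - (b - a) / 2 = a by ring,
    show (a + b) / 2 + (b - a) / 2 = b by ring, integral_Icc_eq_integral_Ioc,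
    ← intervalIntegral.integral_of_le hab.le] at hlim
  exact tendsto_nhds_unique hlim (tendsto_const_nhds.congr fun n =>
    (hz _ (f n).contDiff (f n).hasCompactSupport (hfV n)).symm)

theorem ae_eq_zero_of_intervalIntegral_eq_zero_of_dense {E : Type*} [NormedAddCommGroup E]
    [NormedSpace ℝ E] [CompleteSpace E] {D : Set ℝ} (hD : Dense D) {h : ℝ → E}
    (hh : LocallyIntegrable h) (hz : ∀ a ∈ D, ∀ b ∈ D, a < b → ∫ x in a..b, h x = 0) :
    h =ᵐ[volume] 0 := by
  obtain ⟨x₀, hx₀⟩ := hD.nonempty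
  have hG : (fun x => ∫ t in x₀..x, h t) = 0 := by
    refine (intervalIntegral.continuous_primitive (fun _ _ =>
      (hh.integrableOn_isCompact isCompact_uIcc).intervalIntegrable) x₀).ext_on
      hD continuous_const fun x hx => ?_
    rcases lt_trichotomy x₀ x with hlt | rfl | hgt
    · exact hz x₀ hx₀ x hx hlt
    · exact intervalIntegral.integral_same
    · exact (intervalIntegral.integral_symm _ _).trans (by rw [hz x hx x₀ hx₀ hgt, neg_zero]; rfl)
  filter_upwards [LocallyIntegrable.ae_hasDerivAt_integral hh] with x hx
  have hx₀ := hx x₀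
  rw [hG] at hx₀
  exact hx₀.unique (hasDerivAt_const x 0)

theorem ae_eq_zero_of_integral_mul_eq_zero_of_deriv_eq_zero_off {V : Set ℝ} (hV : IsOpen V)
    (hVd : Dense V) {h : ℝ → ℝ} (hh : LocallyIntegrable h)
    (hz : ∀ χ : ℝ → ℝ, ContDiff ℝ ∞ χ → HasCompactSupport χ → (∀ x ∉ V, deriv χ x = 0) →
      ∫ x, h x * χ x = 0) :
    h =ᵐ[volume] 0 :=
  ae_eq_zero_of_intervalIntegral_eq_zero_of_dense hVd hh fun _ ha _ hb hab =>
    intervalIntegral_eq_zero_of_integral_mul_eq_zero_of_deriv_eq_zero_off hV hh hz ha hb hab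

/-- `u` is a weak solution of `u_t + (f(x, u))_x = 0` on `(0, T) × ℝ`. -/
def IsWeakSolution (f : ℝ → ℝ → ℝ) (T : ℝ) (u : ℝ → ℝ → ℝ) : Prop :=
  ∀ φ : ℝ × ℝ → ℝ, ContDiff ℝ ∞ φ → HasCompactSupport φ → tsupport φ ⊆ Ioo 0 T ×ˢ univ →
    ∫ t in Ioo 0 T, ∫ x, (u t x * deriv (fun s => φ (s, x)) t
      + f x (u t x) * deriv (fun y => φ (t, y)) x) = 0

namespace IsWeakSolution

variable {f : ℝ → ℝ → ℝ} {T : ℝ} {u : ℝ → ℝ → ℝ}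

theorem setIntegral_deriv_mul_add_mul_eq_zero (hu : IsWeakSolution f T u) {ψ χ : ℝ → ℝ}
    (hψ : ContDiff ℝ ∞ ψ) (hψT : tsupport ψ ⊆ Ioo 0 T)
    (hχ : ContDiff ℝ ∞ χ) (hχs : HasCompactSupport χ)
    (hi : ∀ t, Integrable (fun x => u t x * χ x))
    (hfi : ∀ t, Integrable (fun x => f x (u t x) * deriv χ x)) :
    ∫ t in Ioo 0 T, (deriv ψ t * (∫ x, u t x * χ x) + ψ t * ∫ x, f x (u t x) * deriv χ x) = 0 := by
  have hφ := hu (fun p => ψ p.1 * χ p.2) ((hψ.comp contDiff_fst).mul (hχ.comp contDiff_snd))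
    (((hasCompactSupport_of_tsupport_subset_Ioo hψT).prod hχs).of_isClosed_subset
      (isClosed_tsupport _) (tsupport_mul_prod_subset ψ χ))
    ((tsupport_mul_prod_subset ψ χ).trans (prod_mono hψT (subset_univ _)))
  refine Eq.trans (setIntegral_congr_fun measurableSet_Ioo fun t _ => ?_) hφ
  rw [← integral_const_mul, ← integral_const_mul,
    ← integral_add ((hi t).const_mul _) ((hfi t).const_mul _)]
  congr 1 with x
  dsimp only
  rw [deriv_mul_const (hψ.differentiable (by simp) t),
    deriv_const_mul _ (hχ.differentiable (by simp) x)]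
  ring

theorem integral_mul_eq_of_flux_mul_deriv_eq_zero (hu : IsWeakSolution f T u) (hT : 0 < T)
    {χ : ℝ → ℝ} (hχ : ContDiff ℝ ∞ χ) (hχs : HasCompactSupport χ)
    (hi : ∀ t, Integrable (fun x => u t x * χ x))
    (hflux : ∀ t x, f x (u t x) * deriv χ x = 0)
    (hcont : ContinuousOn (fun t => ∫ x, u t x * χ x) (Icc 0 T)) {t : ℝ} (ht : t ∈ Icc 0 T) :
    ∫ x, u t x * χ x = ∫ x, u 0 x * χ x := by
  have hz : ∀ ψ : ℝ → ℝ, ContDiff ℝ ∞ ψ → HasCompactSupport ψ → tsupport ψ ⊆ Ioo 0 T →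
      ∫ s, (∫ x, u s x * χ x) * deriv ψ s = 0 := fun ψ hψ _ hψT => by
    rw [← setIntegral_eq_integral_of_tsupport_subset
      (tsupport_mul_subset_right.trans (tsupport_deriv_subset.trans hψT))]
    simpa [hflux, mul_comm] using
      hu.setIntegral_deriv_mul_add_mul_eq_zero hψ hψT hχ hχs hi (by simp [hflux])
  obtain ⟨c, hc⟩ := exists_ae_restrict_eq_const_of_integral_mul_deriv_eq_zero isOpen_Ioo
    ordConnected_Ioo (hcont.integrableOn_Icc.locallyIntegrableOn.mono_set Ioo_subset_Icc_self) hz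
  rw [Measure.restrict_congr_set Ioo_ae_eq_Icc] at hc
  have hF := Measure.eqOn_Icc_of_ae_eq volume hT.ne hc hcont continuousOn_const
  exact (hF ht).trans (hF ⟨le_rfl, hT.le⟩).symm

theorem integral_flux_mul_deriv_eq_zero_of_stationary (hu : IsWeakSolution f T u) (hT : 0 < T)
    (hstat : ∀ t ∈ Ioo 0 T, u t =ᵐ[volume] u 0) {χ : ℝ → ℝ} (hχ : ContDiff ℝ ∞ χ)
    (hχs : HasCompactSupport χ) (hi : ∀ t, Integrable (fun x => u t x * χ x))
    (hfi : ∀ t, Integrable (fun x => f x (u t x) * deriv χ x)) :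
    ∫ x, f x (u 0 x) * deriv χ x = 0 := by
  obtain ⟨ψ, hψ, hψc, hψT, hψ1⟩ :=
    isOpen_Ioo.exists_contDiff_tsupport_subset_integral_eq_one (μ := volume) (nonempty_Ioo.2 hT)
  have hψi : Integrable ψ := hψ.continuous.integrable_of_hasCompactSupport hψc
  have hψ'i : Integrable (deriv ψ) :=
    (hψ.continuous_deriv (by simp)).integrable_of_hasCompactSupport hψc.deriv
  have hψ' : ∫ s, deriv ψ s = 0 := integral_eq_zero_of_hasDerivAt_of_integrable
    (fun s => (hψ.differentiable (by simp) s).hasDerivAt) hψ'i hψi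
  have hcongr : ∀ t ∈ Ioo 0 T, ∀ F : ℝ → ℝ → ℝ, ∫ x, F x (u t x) = ∫ x, F x (u 0 x) :=
    fun t ht F => integral_congr_ae <| by filter_upwards [hstat t ht] with x hx; rw [hx]
  have h := hu.setIntegral_deriv_mul_add_mul_eq_zero hψ hψT hχ hχs hi hfi
  rw [setIntegral_congr_fun measurableSet_Ioo (g := fun t =>
      deriv ψ t * (∫ x, u 0 x * χ x) + ψ t * ∫ x, f x (u 0 x) * deriv χ x) fun t ht => by
      dsimp only
      congr 2
      · exact hcongr t ht fun x v => v * χ x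
      · exact hcongr t ht fun x v => f x v * deriv χ x,
    integral_add (hψ'i.integrableOn.mul_const _) (hψi.integrableOn.mul_const _),
    integral_mul_const, integral_mul_const,
    setIntegral_eq_integral_of_tsupport_subset (tsupport_deriv_subset.trans hψT),
    setIntegral_eq_integral_of_tsupport_subset hψT, hψ', hψ1] at h
  simpa using h

theorem ae_eq_of_flux_eq_zero_on_dense (hu : IsWeakSolution f T u) (hT : 0 < T) {V : Set ℝ}
    (hV : IsOpen V) (hVd : Dense V) (hfV : ∀ x ∈ V, ∀ v, f x v = 0)
    (hu_top : ∀ t, MemLp (u t) ⊤ volume)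
    (hcont : ∀ g : ℝ → ℝ, Integrable g → ContinuousOn (fun t => ∫ x, u t x * g x) (Icc 0 T))
    {t : ℝ} (ht : t ∈ Icc 0 T) : u t =ᵐ[volume] u 0 := by
  have hint : ∀ s {χ : ℝ → ℝ}, Continuous χ → HasCompactSupport χ →
      Integrable (fun x => u s x * χ x) := fun s _ hχ hχs =>
    (hχ.integrable_of_hasCompactSupport hχs).mul_of_top_right (hu_top s)
  have hz := ae_eq_zero_of_integral_mul_eq_zero_of_deriv_eq_zero_off hV hVd
    (((hu_top t).sub (hu_top 0)).locallyIntegrable le_top) fun χ hχ hχs hχV => by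
      have hflux : ∀ s x, f x (u s x) * deriv χ x = 0 := fun s x => by
        by_cases hx : x ∈ V
        · rw [hfV x hx, zero_mul]
        · rw [hχV x hx, mul_zero]
      simp only [Pi.sub_apply, sub_mul]
      rw [integral_sub (hint t hχ.continuous hχs) (hint 0 hχ.continuous hχs),
        hu.integral_mul_eq_of_flux_mul_deriv_eq_zero hT hχ hχs (fun s => hint s hχ.continuous hχs)
          hflux (hcont χ (hχ.continuous.integrable_of_hasCompactSupport hχs)) ht, sub_self]
  filter_upwards [hz] with x hx using sub_eq_zero.1 hx

theorem exists_flux_ae_eq_const_of_stationary (hu : IsWeakSolution f T u) (hT : 0 < T)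
    (hstat : ∀ t ∈ Ioo 0 T, u t =ᵐ[volume] u 0) (hu_top : ∀ t, MemLp (u t) ⊤ volume)
    (hf_top : ∀ t, MemLp (fun x => f x (u t x)) ⊤ volume) :
    ∃ c, ∀ᵐ x, f x (u 0 x) = c := by
  obtain ⟨c, hc⟩ := exists_ae_restrict_eq_const_of_integral_mul_deriv_eq_zero isOpen_univ
    ordConnected_univ (((hf_top 0).locallyIntegrable le_top).locallyIntegrableOn univ)
    fun χ hχ hχs _ => hu.integral_flux_mul_deriv_eq_zero_of_stationary hT hstat hχ hχs
      (fun t => (hχ.continuous.integrable_of_hasCompactSupport hχs).mul_of_top_right (hu_top t))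
      (fun t => ((hχ.continuous_deriv (by simp)).integrable_of_hasCompactSupport
        hχs.deriv).mul_of_top_right (hf_top t))
  exact ⟨c, by rwa [Measure.restrict_univ] at hc⟩

end IsWeakSolution

theorem isOpen_Vset (κ : ℝ) (q : ℕ → ℝ) : IsOpen (Vset κ q) :=
  isOpen_iUnion fun _ => isOpen_Ioo

theorem dense_Vset {κ : ℝ} (hκ : 0 < κ) {q : ℕ → ℝ} (hq : DenseRange q) : Dense (Vset κ q) := by
  refine hq.mono ?_
  rintro _ ⟨i, rfl⟩
  have : 0 < κ * (2 : ℝ) ^ (-(i : ℤ) - 2) := by positivity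
  exact mem_iUnion.2 ⟨i, by constructor <;> linarith⟩

theorem measurable_alphaFun (κ : ℝ) (q : ℕ → ℝ) : Measurable (alphaFun κ q) :=
  measurable_const.ite (isOpen_Vset κ q).isClosed_compl.measurableSet measurable_const

theorem memLp_top_alphaFun (κ : ℝ) (q : ℕ → ℝ) : MemLp (alphaFun κ q) ⊤ volume :=
  memLp_top_of_bound (measurable_alphaFun κ q).aestronglyMeasurable 1 <|
    ae_of_all _ fun x => by unfold alphaFun; split_ifs <;> simp

theorem alphaFun_eq_zero_of_mem_Vset {κ : ℝ} {q : ℕ → ℝ} {x : ℝ} (hx : x ∈ Vset κ q) :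
    alphaFun κ q x = 0 :=
  if_neg (not_not_intro hx)

/-- The flux vanishes on the open set `V`, which has positive measure, so the constant is zero. -/
theorem ae_eq_zero_or_one_of_alphaFun_flux_ae_eq_const {κ : ℝ} {q : ℕ → ℝ}
    (hV : (Vset κ q).Nonempty) {v : ℝ → ℝ} {c : ℝ}
    (hc : ∀ᵐ x, alphaFun κ q x * (v x * (1 - v x)) = c) :
    ∀ᵐ x, x ∈ Kset κ q → v x = 0 ∨ v x = 1 := by
  have hc0 : c = 0 := by
    by_contra hne
    refine (isOpen_Vset κ q).measure_ne_zero volume hV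
      (measure_mono_null (fun x hx => ?_) (ae_iff.1 hc))
    show ¬alphaFun κ q x * _ = c
    rw [alphaFun_eq_zero_of_mem_Vset hx, zero_mul]
    exact fun h => hne h.symm
  filter_upwards [hc] with x hx hxK
  rw [hc0, alphaFun, if_pos hxK, one_mul, mul_eq_zero, sub_eq_zero] at hx
  exact hx.imp id Eq.symm

theorem unbounded_variation_flux_rigidity_general
    (κ : ℝ) (hκ : 0 < κ)
    (q : ℕ → ℝ)
    (hq_range : Set.range q = Set.range ((↑) : ℚ → ℝ))
    (T : ℝ) (hT : 0 < T)
    (u : ℝ → ℝ → ℝ) (hmeas : Measurable (Function.uncurry u))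
    (C : ℝ) (hbdd : ∀ t x, |u t x| ≤ C)
    -- `u` is a weak solution of `u_t + (α(x) u(1−u))_x = 0` on `(0,T) × ℝ`
    (hweak : ∀ φ : ℝ × ℝ → ℝ, ContDiff ℝ (⊤ : ℕ∞) φ → HasCompactSupport φ →
      tsupport φ ⊆ Set.Ioo 0 T ×ˢ Set.univ →
      (∫ t in Set.Ioo (0:ℝ) T, ∫ x : ℝ,
        (u t x * deriv (fun s => φ (s, x)) t
          + alphaFun κ q x * (u t x * (1 - u t x)) * deriv (fun y => φ (t, y)) x)) = 0)
    -- `t ↦ u(t,·)` is continuous from `[0,T]` into `L^∞(ℝ)` with the weak* topology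
    (hwstar : ∀ g : ℝ → ℝ, Integrable g →
      ContinuousOn (fun t => ∫ x, u t x * g x) (Set.Icc 0 T)) :
    (∀ t ∈ Set.Icc (0:ℝ) T, u t =ᵐ[volume] u 0) ∧
    (∀ᵐ x, x ∈ Kset κ q → u 0 x = 0 ∨ u 0 x = 1) := by
  have hsol : IsWeakSolution (fun x v => alphaFun κ q x * (v * (1 - v))) T u := hweak
  have hVd := dense_Vset hκ
    (show DenseRange q by rw [DenseRange, hq_range]; exact Rat.denseRange_cast)
  have hu : ∀ t, MemLp (u t) ⊤ volume := fun t =>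
    memLp_top_of_bound (hmeas.comp measurable_prodMk_left).aestronglyMeasurable C
      (ae_of_all _ (hbdd t))
  have hstat : ∀ t ∈ Icc 0 T, u t =ᵐ[volume] u 0 := fun t ht =>
    hsol.ae_eq_of_flux_eq_zero_on_dense hT (isOpen_Vset κ q) hVd
      (fun x hx v => by rw [alphaFun_eq_zero_of_mem_Vset hx, zero_mul]) hu hwstar ht
  obtain ⟨c, hc⟩ := hsol.exists_flux_ae_eq_const_of_stationary hT
    (fun t ht => hstat t (Ioo_subset_Icc_self ht)) hu fun t =>
      (((memLp_top_const 1).sub (hu t)).mul (r := ⊤) (hu t)).mul (r := ⊤) (memLp_top_alphaFun κ q)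
  exact ⟨hstat, ae_eq_zero_or_one_of_alphaFun_flux_ae_eq_const hVd.nonempty hc⟩

/-- Theorem 7.4: for the flux `f(x,u) = α(x) u(1−u)` with `α = χ_K`, any bounded
weak solution of `u_t + (α(x) u(1−u))_x = 0` on `[0,T] × ℝ` which is weak*
continuous in time is constant in time, and its (initial) value `ū = u(0,·)`
satisfies `ū(x) ∈ {0,1}` for a.e. `x ∈ K`. -/
theorem unbounded_variation_flux_rigidity
    (κ : ℝ) (hκ : 0 < κ)
    (q : ℕ → ℝ) (hq_inj : Function.Injective q)
    (hq_range : Set.range q = Set.range ((↑) : ℚ → ℝ))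
    (T : ℝ) (hT : 0 < T)
    (u : ℝ → ℝ → ℝ) (hmeas : Measurable (Function.uncurry u))
    (C : ℝ) (hbdd : ∀ t x, |u t x| ≤ C)
    -- `u` is a weak solution of `u_t + (α(x) u(1−u))_x = 0` on `(0,T) × ℝ`
    (hweak : ∀ φ : ℝ × ℝ → ℝ, ContDiff ℝ (⊤ : ℕ∞) φ → HasCompactSupport φ →
      tsupport φ ⊆ Set.Ioo 0 T ×ˢ Set.univ →
      (∫ t in Set.Ioo (0:ℝ) T, ∫ x : ℝ,
        (u t x * deriv (fun s => φ (s, x)) t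
          + alphaFun κ q x * (u t x * (1 - u t x)) * deriv (fun y => φ (t, y)) x)) = 0)
    -- `t ↦ u(t,·)` is continuous from `[0,T]` into `L^∞(ℝ)` with the weak* topology
    (hwstar : ∀ g : ℝ → ℝ, Integrable g →
      ContinuousOn (fun t => ∫ x, u t x * g x) (Set.Icc 0 T)) :
    (∀ t ∈ Set.Icc (0:ℝ) T, u t =ᵐ[volume] u 0) ∧
    (∀ᵐ x, x ∈ Kset κ q → u 0 x = 0 ∨ u 0 x = 1) :=
  unbounded_variation_flux_rigidity_general κ hκ q hq_range T hT u hmeas C hbdd hweak hwstar
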